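/- arXiv:math/0210136 — 5 statements merged into one kernel-verified Lean document; each statement's English description precedes it below -/
import Mathlib

section
/- For every A ∈ SL(2,ℝ) one has Z(Aᵀ) = Z(A)ᵀ and Z(A)ᵀ · B · Z(A) = B; in particular, each matrix Z(A) is symplectic with respect to the bilinear form given by B. -/
/- STATEMENT 0: For every A ∈ SL(2,ℝ), Z(Aᵀ) = Z(A)ᵀ and Z(A)ᵀ · B · Z(A) = B. -/

open Matrix

noncomputable section

/-- `α_j = √(binom(2n−1, j−1))` for a 1-based index `j`. -/
def alphaCoef (n j : ℕ) : ℝ := Real.sqrt (Nat.choose (2 * n - 1) (j - 1))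

/-- The `2n × 2n` matrix `Z(A)`; indices here are 0-based, the formula is stated
with the 1-based indices `i1 = i+1`, `j1 = j+1`.  A summand is `0` whenever one of
the exponents `2n−i1−l`, `i1+l−j1`, `j1−l−1` would be negative. -/
def Zmat (n : ℕ) (A : Matrix (Fin 2) (Fin 2) ℝ) : Matrix (Fin (2 * n)) (Fin (2 * n)) ℝ :=
  fun i j =>
    ∑ l ∈ Finset.range (2 * n + 1),
      if ((i : ℕ) + 1) + l ≤ 2 * n ∧ (j : ℕ) + 1 ≤ ((i : ℕ) + 1) + l ∧ l + 1 ≤ (j : ℕ) + 1 then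
        (Nat.choose ((j : ℕ) + 1 - 1) l : ℝ) *
          (Nat.choose (2 * n - ((j : ℕ) + 1)) (2 * n - ((i : ℕ) + 1) - l) : ℝ) *
          (alphaCoef n ((i : ℕ) + 1))⁻¹ * alphaCoef n ((j : ℕ) + 1) *
          (A 0 0) ^ (2 * n - ((i : ℕ) + 1) - l) * (A 0 1) ^ l *
          (A 1 0) ^ (((i : ℕ) + 1) + l - ((j : ℕ) + 1)) * (A 1 1) ^ ((j : ℕ) + 1 - l - 1)
      else 0

/-- The matrix `B`, with `B_{ij} = (−1)^j` if `i + j = 2n+1` (1-based indices) and `0`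
otherwise. -/
def Bmat (n : ℕ) : Matrix (Fin (2 * n)) (Fin (2 * n)) ℝ :=
  fun i j => if ((i : ℕ) + 1) + ((j : ℕ) + 1) = 2 * n + 1 then (-1 : ℝ) ^ ((j : ℕ) + 1) else 0


open Polynomial Finset in
theorem coeff_linpow (a c : ℝ) (e p : ℕ) :
    ((C a * X + C c)^e).coeff p = if p ≤ e then (e.choose p : ℝ) * a^p * c^(e-p) else 0 := by
  rw [add_pow, finset_sum_coeff]
  have h : ∀ k ∈ Finset.range (e+1),
      ((C a * X)^k * (C c)^(e-k) * (e.choose k : ℝ[X])).coeff p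
      = if k = p then (if p ≤ e then (e.choose p : ℝ) * a^p * c^(e-p) else 0) else 0 := by
    intro k hk
    rw [Finset.mem_range] at hk
    have heq : (C a * X)^k * (C c)^(e-k) * ((e.choose k : ℕ) : ℝ[X])
        = C (a^k * c^(e-k) * (e.choose k : ℝ)) * X^k := by
      rw [← C_eq_natCast, mul_pow, ← C_pow, ← C_pow, C_mul, C_mul]; ring
    rw [heq, coeff_C_mul, coeff_X_pow]
    by_cases hkp : k = p
    · subst hkp; simp [Nat.lt_succ_iff.mp hk]; ring
    · simp [hkp, Ne.symm hkp]
  rw [Finset.sum_congr rfl h, Finset.sum_ite_eq' (Finset.range (e+1)) p]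
  by_cases hpe : p ≤ e
  · simp [Finset.mem_range, Nat.lt_succ_iff, hpe]
  · simp [hpe]
open Polynomial in
theorem Zmat_coeff (n : ℕ) (A : Matrix (Fin 2) (Fin 2) ℝ) (i j : Fin (2*n)) :
    Zmat n A i j = (alphaCoef n ((i:ℕ)+1))⁻¹ * alphaCoef n ((j:ℕ)+1) *
      ((C (A 0 0) * X + C (A 1 0))^(2*n - ((j:ℕ)+1)) *
        (C (A 0 1) * X + C (A 1 1))^(j:ℕ)).coeff (2*n - ((i:ℕ)+1)) := by
  have hi : (i:ℕ) < 2*n := i.isLt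
  have hj : (j:ℕ) < 2*n := j.isLt
  set M := 2*n - ((i:ℕ)+1) with hM
  rw [mul_comm ((C (A 0 0) * X + C (A 1 0))^(2*n - ((j:ℕ)+1))), coeff_mul,
    Finset.Nat.sum_antidiagonal_eq_sum_range_succ_mk, Finset.mul_sum]
  rw [Zmat]
  rw [← Finset.sum_subset (Finset.range_subset_range.2 (by omega : M+1 ≤ 2*n+1))
    (by intro l _ hl; rw [Finset.mem_range] at hl; rw [if_neg]; omega)]
  apply Finset.sum_congr rfl
  intro l hl
  rw [Finset.mem_range] at hl
  rw [coeff_linpow, coeff_linpow]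
  by_cases h : ((i:ℕ) + 1) + l ≤ 2 * n ∧ (j:ℕ) + 1 ≤ ((i:ℕ) + 1) + l ∧ l + 1 ≤ (j:ℕ) + 1
  · rw [if_pos h, if_pos (by omega : l ≤ (j:ℕ)), if_pos (by omega : M - l ≤ 2*n - ((j:ℕ)+1))]
    have e1 : (j:ℕ) + 1 - 1 = (j:ℕ) := by omega
    have e2 : 2*n - ((i:ℕ)+1) - l = M - l := by omega
    have e3 : ((i:ℕ)+1) + l - ((j:ℕ)+1) = 2*n - ((j:ℕ)+1) - (M - l) := by omega
    have e4 : (j:ℕ) + 1 - l - 1 = (j:ℕ) - l := by omega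
    rw [e1, e2, e3, e4]; ring
  · rw [if_neg h]
    by_cases h3 : l ≤ (j:ℕ)
    · rw [if_pos h3, if_neg (by omega : ¬ (M - l ≤ 2*n - ((j:ℕ)+1)))]; ring
    · rw [if_neg h3]; ring
open Polynomial

def homsub (d : ℕ) (F : ℝ[X]) (u v : ℝ[X]) : ℝ[X] :=
  ∑ m ∈ Finset.range (d+1), C (F.coeff m) * u^m * v^(d-m)

theorem homsub_sum {ι : Type*} (d : ℕ) (s : Finset ι) (f : ι → ℝ[X]) (u v : ℝ[X]) :
    homsub d (∑ k ∈ s, f k) u v = ∑ k ∈ s, homsub d (f k) u v := by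
  unfold homsub
  rw [Finset.sum_comm]
  apply Finset.sum_congr rfl
  intro m _
  rw [finset_sum_coeff, map_sum, Finset.sum_mul, Finset.sum_mul]

theorem homsub_monomial (d p : ℕ) (hp : p ≤ d) (r : ℝ) (u v : ℝ[X]) :
    homsub d (monomial p r) u v = C r * u^p * v^(d-p) := by
  unfold homsub
  rw [Finset.sum_eq_single p]
  · rw [coeff_monomial, if_pos rfl]
  · intro m _ hm
    rw [coeff_monomial, if_neg (Ne.symm hm), map_zero, zero_mul, zero_mul]
  · intro h; exact absurd (Finset.mem_range.2 (Nat.lt_succ_of_le hp)) h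

theorem homsub_mul (dF dG : ℕ) (F G : ℝ[X]) (hF : F.natDegree ≤ dF) (hG : G.natDegree ≤ dG)
    (u v : ℝ[X]) :
    homsub (dF+dG) (F*G) u v = homsub dF F u v * homsub dG G u v := by
  have hF' : F = ∑ p ∈ Finset.range (dF+1), monomial p (F.coeff p) :=
    (Polynomial.as_sum_range' F (dF+1) (Nat.lt_succ_of_le hF))
  have hG' : G = ∑ q ∈ Finset.range (dG+1), monomial q (G.coeff q) :=
    (Polynomial.as_sum_range' G (dG+1) (Nat.lt_succ_of_le hG))
  conv_lhs => rw [hF', hG']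
  rw [Finset.sum_mul_sum, homsub_sum]
  conv_rhs => rw [hF', hG', homsub_sum, homsub_sum, Finset.sum_mul_sum]
  apply Finset.sum_congr rfl
  intro p hp
  rw [homsub_sum]
  apply Finset.sum_congr rfl
  intro q hq
  rw [Finset.mem_range] at hp hq
  rw [monomial_mul_monomial, homsub_monomial _ _ (by omega), homsub_monomial _ _ (by omega),
    homsub_monomial _ _ (by omega), C_mul]
  have e1 : dF + dG - (p + q) = (dF - p) + (dG - q) := by omega
  rw [e1, pow_add, pow_add]; ring

theorem homsub_linpow (a c : ℝ) (e : ℕ) (u v : ℝ[X]) :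
    homsub e ((C a * X + C c)^e) u v = (C a * u + C c * v)^e := by
  unfold homsub
  conv_rhs => rw [add_pow]
  apply Finset.sum_congr rfl
  intro m hm
  rw [Finset.mem_range] at hm
  rw [coeff_linpow, if_pos (by omega : m ≤ e)]
  rw [mul_pow, mul_pow, ← C_eq_natCast, C_mul, C_mul, C_pow, C_pow]
  ring
open Polynomial

theorem natDegree_linpow_le (a c : ℝ) (e : ℕ) : ((C a * X + C c)^e).natDegree ≤ e :=
  le_trans (natDegree_pow_le) (by
    calc e * (C a * X + C c).natDegree ≤ e * 1 :=
          Nat.mul_le_mul_left e (natDegree_linear_le)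
      _ = e := mul_one e)

theorem alpha_ne (n : ℕ) (k : Fin (2*n)) : alphaCoef n ((k:ℕ)+1) ≠ 0 := by
  have hk := k.isLt
  have h : 0 < Nat.choose (2*n-1) ((k:ℕ)+1-1) := Nat.choose_pos (by omega)
  exact ne_of_gt (Real.sqrt_pos.2 (by exact_mod_cast h))

theorem Zmat_mul (n : ℕ) (M N : Matrix (Fin 2) (Fin 2) ℝ) :
    Zmat n (M * N) = Zmat n M * Zmat n N := by
  ext i j
  have hi := i.isLt; have hj := j.isLt
  rw [Matrix.mul_apply]
  set u : ℝ[X] := C (M 0 0) * X + C (M 1 0) with hu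
  set v : ℝ[X] := C (M 0 1) * X + C (M 1 1) with hv
  set G : ℝ[X] := (C (N 0 0) * X + C (N 1 0))^(2*n - ((j:ℕ)+1)) *
    (C (N 0 1) * X + C (N 1 1))^(j:ℕ) with hG
  have step1 : ∀ k : Fin (2*n), Zmat n M i k * Zmat n N k j
      = (alphaCoef n ((i:ℕ)+1))⁻¹ * alphaCoef n ((j:ℕ)+1) *
        (G.coeff (2*n - ((k:ℕ)+1)) *
          ((u^(2*n-((k:ℕ)+1)) * v^(k:ℕ)).coeff (2*n - ((i:ℕ)+1)))) := by
    intro k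
    rw [Zmat_coeff, Zmat_coeff]
    have hk0 := alpha_ne n k
    have hc : alphaCoef n ((k:ℕ)+1) * (alphaCoef n ((k:ℕ)+1))⁻¹ = 1 := mul_inv_cancel₀ hk0
    linear_combination ((alphaCoef n ((i:ℕ)+1))⁻¹ * alphaCoef n ((j:ℕ)+1) *
      ((u^(2*n-((k:ℕ)+1)) * v^(k:ℕ)).coeff (2*n - ((i:ℕ)+1))) *
      G.coeff (2*n - ((k:ℕ)+1))) * hc
  rw [Finset.sum_congr rfl (fun k _ => step1 k), ← Finset.mul_sum]
  have step2 : (∑ k : Fin (2*n), G.coeff (2*n - ((k:ℕ)+1)) *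
        ((u^(2*n-((k:ℕ)+1)) * v^(k:ℕ)).coeff (2*n - ((i:ℕ)+1))))
      = (homsub (2*n-1) G u v).coeff (2*n - ((i:ℕ)+1)) := by
    rw [homsub, finset_sum_coeff]
    have h2 : 2*n-1+1 = 2*n := by omega
    rw [h2, ← Finset.sum_range_reflect]
    rw [Fin.sum_univ_eq_sum_range (fun k => G.coeff (2*n - (k+1)) *
        ((u^(2*n-(k+1)) * v^k).coeff (2*n - ((i:ℕ)+1))))]
    apply Finset.sum_congr rfl
    intro m hm
    rw [Finset.mem_range] at hm
    have e1 : 2*n - (m+1) = 2*n-1-m := by omega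
    have e2 : (2*n-1) - (2*n-1-m) = m := by omega
    rw [e1, e2, mul_assoc, coeff_C_mul]
  rw [step2]
  have hFdeg := natDegree_linpow_le (N 0 0) (N 1 0) (2*n - ((j:ℕ)+1))
  have hGdeg := natDegree_linpow_le (N 0 1) (N 1 1) (j:ℕ)
  have hsplit : 2*n-1 = (2*n - ((j:ℕ)+1)) + (j:ℕ) := by omega
  have step3 : homsub (2*n-1) G u v
      = (C ((M*N) 0 0) * X + C ((M*N) 1 0))^(2*n - ((j:ℕ)+1)) *
        (C ((M*N) 0 1) * X + C ((M*N) 1 1))^(j:ℕ) := by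
    rw [hG, hsplit, homsub_mul _ _ _ _ hFdeg hGdeg, homsub_linpow, homsub_linpow]
    have m00 : (M*N) 0 0 = M 0 0 * N 0 0 + M 0 1 * N 1 0 := by
      simp [Matrix.mul_apply, Fin.sum_univ_two]
    have m10 : (M*N) 1 0 = M 1 0 * N 0 0 + M 1 1 * N 1 0 := by
      simp [Matrix.mul_apply, Fin.sum_univ_two]
    have m01 : (M*N) 0 1 = M 0 0 * N 0 1 + M 0 1 * N 1 1 := by
      simp [Matrix.mul_apply, Fin.sum_univ_two]
    have m11 : (M*N) 1 1 = M 1 0 * N 0 1 + M 1 1 * N 1 1 := by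
      simp [Matrix.mul_apply, Fin.sum_univ_two]
    rw [m00, m10, m01, m11, hu, hv]
    simp only [C_add, C_mul]
    ring
  rw [step3, Zmat_coeff]
theorem chf (x y : ℕ) : Nat.choose (x+y) x * (x.factorial * y.factorial) = (x+y).factorial := by
  have h := Nat.choose_mul_factorial_mul_factorial (Nat.le_add_right x y)
  rw [Nat.add_sub_cancel_left] at h
  rw [← h]; ring

theorem chf' (x y : ℕ) : Nat.choose (x+y) y * (x.factorial * y.factorial) = (x+y).factorial := by
  have h := Nat.choose_mul_factorial_mul_factorial (Nat.le_add_left y x)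
  rw [Nat.add_sub_cancel] at h
  rw [← h]; ring

theorem choose4 (p q r s : ℕ) :
    Nat.choose (p+q+r+s) (r+s) * (Nat.choose (r+s) r * Nat.choose (p+q) p)
      = Nat.choose (p+q+r+s) (q+s) * (Nat.choose (q+s) q * Nat.choose (p+r) p) := by
  have hpos : 0 < p.factorial * q.factorial * r.factorial * s.factorial := by positivity
  apply Nat.eq_of_mul_eq_mul_right hpos
  have h3 := chf' (p+q) (r+s)
  have h6 : Nat.choose ((p+q)+(r+s)) (q+s) * ((p+r).factorial * (q+s).factorial)
      = ((p+q)+(r+s)).factorial := by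
    rw [show (p+q)+(r+s) = (p+r)+(q+s) by ring]; exact chf' (p+r) (q+s)
  calc Nat.choose (p+q+r+s) (r+s) * (Nat.choose (r+s) r * Nat.choose (p+q) p) *
        (p.factorial * q.factorial * r.factorial * s.factorial)
      = Nat.choose ((p+q)+(r+s)) (r+s) *
          ((Nat.choose (r+s) r * (r.factorial * s.factorial)) *
            (Nat.choose (p+q) p * (p.factorial * q.factorial))) := by
        rw [show (p+q)+(r+s) = p+q+r+s by ring]; ring
    _ = Nat.choose ((p+q)+(r+s)) (r+s) * ((p+q).factorial * (r+s).factorial) := by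
        rw [chf r s, chf p q]; ring
    _ = ((p+q)+(r+s)).factorial := h3
    _ = Nat.choose ((p+q)+(r+s)) (q+s) * ((p+r).factorial * (q+s).factorial) := h6.symm
    _ = Nat.choose ((p+q)+(r+s)) (q+s) *
          ((Nat.choose (q+s) q * (q.factorial * s.factorial)) *
            (Nat.choose (p+r) p * (p.factorial * r.factorial))) := by
        rw [chf q s, chf p r]; ring
    _ = Nat.choose (p+q+r+s) (q+s) * (Nat.choose (q+s) q * Nat.choose (p+r) p) *
        (p.factorial * q.factorial * r.factorial * s.factorial) := by
        rw [show (p+q)+(r+s) = p+q+r+s by ring]; ring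

theorem sqrt_ratio_eq (ci cj x y : ℕ) (hci : 0 < ci) (hcj : 0 < cj) (h : cj * x = ci * y) :
    (Real.sqrt ci)⁻¹ * Real.sqrt cj * x = (Real.sqrt cj)⁻¹ * Real.sqrt ci * y := by
  have hsi : (0:ℝ) < Real.sqrt ci := Real.sqrt_pos.2 (by exact_mod_cast hci)
  have hsj : (0:ℝ) < Real.sqrt cj := Real.sqrt_pos.2 (by exact_mod_cast hcj)
  have h2 : Real.sqrt cj ^ 2 * (x:ℝ) = Real.sqrt ci ^ 2 * (y:ℝ) := by
    rw [Real.sq_sqrt (by positivity), Real.sq_sqrt (by positivity)]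
    exact_mod_cast h
  field_simp
  linear_combination h2
theorem term_eq (n i j l : ℕ) (hi : i < 2*n) (hj : j < 2*n)
    (c1 : i+1+l ≤ 2*n) (c2 : j+1 ≤ i+1+l) (c3 : l+1 ≤ j+1) (a b c d : ℝ) :
    (Nat.choose j l : ℝ) * (Nat.choose (2*n-(j+1)) (2*n-(i+1)-l) : ℝ) *
      (alphaCoef n (i+1))⁻¹ * alphaCoef n (j+1) *
      a^(2*n-(i+1)-l) * c^l * b^(i+1+l-(j+1)) * d^(j+1-l-1)
    = (Nat.choose i ((i+l-j)) : ℝ) * (Nat.choose (2*n-(i+1)) (2*n-(j+1)-(i+l-j)) : ℝ) *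
      (alphaCoef n (j+1))⁻¹ * alphaCoef n (i+1) *
      a^(2*n-(j+1)-(i+l-j)) * b^(i+l-j) * c^(j+1+(i+l-j)-(i+1)) * d^(i+1-(i+l-j)-1) := by
  obtain ⟨p, hp⟩ : ∃ x, 2*n-(i+1)-l = x := ⟨_, rfl⟩
  obtain ⟨q, hq⟩ : ∃ x, i+l-j = x := ⟨_, rfl⟩
  obtain ⟨s, hs⟩ : ∃ x, j-l = x := ⟨_, rfl⟩
  rw [hp, hq]
  rw [show 2*n-(j+1)-q = p from by omega]
  rw [show i+1+l-(j+1) = q from by omega, show j+1-l-1 = s from by omega,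
    show i+1-q-1 = s from by omega, show j+1+q-(i+1) = l from by omega]
  rw [show Nat.choose j l = Nat.choose (l+s) l from by congr 1; omega]
  rw [show Nat.choose (2*n-(j+1)) p = Nat.choose (p+q) p from by congr 1; omega]
  rw [show Nat.choose i q = Nat.choose (q+s) q from by congr 1; omega]
  rw [show Nat.choose (2*n-(i+1)) p = Nat.choose (p+l) p from by congr 1; omega]
  rw [show alphaCoef n (i+1) = Real.sqrt (Nat.choose (p+q+l+s) (q+s)) from by
    unfold alphaCoef; rw [show 2*n-1 = p+q+l+s from by omega, show i+1-1 = q+s from by omega]]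
  rw [show alphaCoef n (j+1) = Real.sqrt (Nat.choose (p+q+l+s) (l+s)) from by
    unfold alphaCoef; rw [show 2*n-1 = p+q+l+s from by omega, show j+1-1 = l+s from by omega]]
  have key := sqrt_ratio_eq (Nat.choose (p+q+l+s) (q+s)) (Nat.choose (p+q+l+s) (l+s))
    (Nat.choose (l+s) l * Nat.choose (p+q) p) (Nat.choose (q+s) q * Nat.choose (p+l) p)
    (Nat.choose_pos (by omega)) (Nat.choose_pos (by omega)) (choose4 p q l s)
  push_cast at key
  linear_combination (a^p * b^q * c^l * d^s) * key
theorem Zmat_transpose (n : ℕ) (A : Matrix (Fin 2) (Fin 2) ℝ) :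
    Zmat n Aᵀ = (Zmat n A)ᵀ := by
  ext i j
  have hi := i.isLt; have hj := j.isLt
  rw [Matrix.transpose_apply]
  simp only [Zmat, Matrix.transpose_apply, Nat.add_sub_cancel]
  rw [← Finset.sum_filter, ← Finset.sum_filter]
  refine Finset.sum_nbij' (fun l => (i:ℕ)+l-(j:ℕ)) (fun m => (j:ℕ)+m-(i:ℕ)) ?_ ?_ ?_ ?_ ?_
  · intro l hl
    simp only [Finset.mem_filter, Finset.mem_range] at hl ⊢
    omega
  · intro m hm
    simp only [Finset.mem_filter, Finset.mem_range] at hm ⊢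
    omega
  · intro l hl
    simp only [Finset.mem_filter, Finset.mem_range] at hl
    omega
  · intro m hm
    simp only [Finset.mem_filter, Finset.mem_range] at hm
    omega
  · intro l hl
    simp only [Finset.mem_filter, Finset.mem_range] at hl
    obtain ⟨-, c1, c2, c3⟩ := hl
    exact term_eq n i j l hi hj c1 c2 c3 (A 0 0) (A 0 1) (A 1 0) (A 1 1)
theorem Zmat_w (n : ℕ) : Zmat n !![0,1;(-1:ℝ),0] = Bmat n := by
  ext i j
  have hi := i.isLt; have hj := j.isLt
  have e00 : (!![0,1;(-1:ℝ),0]) 0 0 = 0 := by norm_num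
  have e01 : (!![0,1;(-1:ℝ),0]) 0 1 = 1 := by norm_num
  have e10 : (!![0,1;(-1:ℝ),0]) 1 0 = -1 := by norm_num
  have e11 : (!![0,1;(-1:ℝ),0]) 1 1 = 0 := by norm_num
  simp only [Zmat, Bmat, Nat.add_sub_cancel, e00, e01, e10, e11]
  rw [Finset.sum_eq_single (j:ℕ)]
  · by_cases h : ((i:ℕ)+1) + ((j:ℕ)+1) = 2*n+1
    · rw [if_pos (by omega : ((i:ℕ)+1) + (j:ℕ) ≤ 2*n ∧ (j:ℕ)+1 ≤ ((i:ℕ)+1)+(j:ℕ) ∧ (j:ℕ)+1 ≤ (j:ℕ)+1), if_pos h]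
      rw [show 2*n - ((i:ℕ)+1) - (j:ℕ) = 0 from by omega,
        show (j:ℕ)+1-(j:ℕ)-1 = 0 from by omega,
        show (i:ℕ)+1+(j:ℕ)-((j:ℕ)+1) = (i:ℕ) from by omega,
        show 2*n-((j:ℕ)+1) = (i:ℕ) from by omega]
      have hα : alphaCoef n ((j:ℕ)+1) = alphaCoef n ((i:ℕ)+1) := by
        unfold alphaCoef
        rw [show (j:ℕ)+1-1 = 2*n-1-((i:ℕ)+1-1) from by omega, Nat.choose_symm (by omega)]
      have hα0 := alpha_ne n i
      have hpar : (-1:ℝ)^(i:ℕ) = (-1)^((j:ℕ)+1) := by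
        rw [neg_one_pow_eq_pow_mod_two, show (i:ℕ) % 2 = ((j:ℕ)+1) % 2 from by omega,
          ← neg_one_pow_eq_pow_mod_two]
      rw [hα, Nat.choose_self, Nat.choose_zero_right, hpar]
      push_cast
      linear_combination ((-1:ℝ)^((j:ℕ)+1)) * (inv_mul_cancel₀ hα0)
    · rw [if_neg h]
      by_cases hc : ((i:ℕ)+1) + (j:ℕ) ≤ 2*n
      · rw [if_pos (by omega : ((i:ℕ)+1) + (j:ℕ) ≤ 2*n ∧ (j:ℕ)+1 ≤ ((i:ℕ)+1)+(j:ℕ) ∧ (j:ℕ)+1 ≤ (j:ℕ)+1)]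
        rw [zero_pow (by omega : 2*n-((i:ℕ)+1)-(j:ℕ) ≠ 0)]
        ring
      · rw [if_neg (by omega)]
  · intro l hl hlj
    by_cases hc : ((i:ℕ)+1) + l ≤ 2*n ∧ (j:ℕ)+1 ≤ ((i:ℕ)+1)+l ∧ l+1 ≤ (j:ℕ)+1
    · rw [if_pos hc, zero_pow (by omega : (j:ℕ)+1-l-1 ≠ 0)]
      ring
    · rw [if_neg hc]
  · intro h
    exact absurd (Finset.mem_range.2 (by omega)) h

theorem stmt0 (n : ℕ) (hn : 0 < n) (A : Matrix (Fin 2) (Fin 2) ℝ) (hA : A.det = 1) :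
    Zmat n Aᵀ = (Zmat n A)ᵀ ∧ (Zmat n A)ᵀ * Bmat n * Zmat n A = Bmat n := by
  have part1 := Zmat_transpose n A
  refine ⟨part1, ?_⟩
  have hw : Aᵀ * !![0,1;(-1:ℝ),0] * A = !![0,1;(-1:ℝ),0] := by
    rw [Matrix.det_fin_two] at hA
    ext a b
    fin_cases a <;> fin_cases b <;>
      simp [Matrix.mul_apply, Fin.sum_univ_two, Matrix.transpose_apply] <;> ring_nf <;>
      linarith
  calc (Zmat n A)ᵀ * Bmat n * Zmat n A
      = Zmat n Aᵀ * Zmat n !![0,1;(-1:ℝ),0] * Zmat n A := by rw [part1, Zmat_w]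
    _ = Zmat n (Aᵀ * !![0,1;(-1:ℝ),0] * A) := by rw [← Zmat_mul, ← Zmat_mul]
    _ = Bmat n := by rw [hw, Zmat_w]

end
end

section
/- For every b ∈ ℝ: (a) k_b⁺ · n_b · k_b⁻ = n_{−b} and n_{b/2} · k_b⁺ · n_{b/2} = h_b in SL(2,ℝ); (b) Z(h_b)(u_n e_n + u_{n+1} e_{n+1}) = (−1)^n · (β(b)^{−1} u_n e_{n+1} − β(b) u_{n+1} e_n) for all u_n, u_{n+1} ∈ ℝ; (c) Z(n_b) is upper triangular, with Z(n_b)_{ij} = α_i^{−1} α_j · binom(j−1, j−i) · b^{j−i} for j > i, Z(n_b)_{ii} = 1, and Z(n_b)_{ij} = 0 for j < i; in particular Z(n_b)_{n,n+1} = n·b. -/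
/- STATEMENT 1: identities for k_b^±, n_b, h_b and for the matrix Z applied to them. -/

open Matrix

noncomputable section

/-- `β(b) = (1 + b²/4)^(1/2)`. -/
def bet (b : ℝ) : ℝ := Real.sqrt (1 + b ^ 2 / 4)

def kplus (b : ℝ) : Matrix (Fin 2) (Fin 2) ℝ := (bet b)⁻¹ • !![b / 2, 1; -1, b / 2]

def kminus (b : ℝ) : Matrix (Fin 2) (Fin 2) ℝ := -((bet b)⁻¹ • !![b / 2, 1; -1, b / 2])

def nmat (b : ℝ) : Matrix (Fin 2) (Fin 2) ℝ := !![1, b; 0, 1]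

def hmat (b : ℝ) : Matrix (Fin 2) (Fin 2) ℝ := !![0, bet b; -(bet b)⁻¹, 0]


lemma bet_pos (b : ℝ) : 0 < bet b := Real.sqrt_pos.mpr (by nlinarith [sq_nonneg b])
lemma bet_sq (b : ℝ) : bet b ^ 2 = 1 + b ^ 2 / 4 := Real.sq_sqrt (by nlinarith [sq_nonneg b])

lemma alphaCoef_pos (n j : ℕ) (h : j - 1 ≤ 2 * n - 1) : 0 < alphaCoef n j := by
  unfold alphaCoef
  have : 0 < Nat.choose (2 * n - 1) (j - 1) := Nat.choose_pos h
  positivity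

lemma Zmat_nmat_lt (n : ℕ) (b : ℝ) (i j : Fin (2*n)) (h : (j:ℕ) < (i:ℕ)) :
    Zmat n (nmat b) i j = 0 := by
  unfold Zmat
  apply Finset.sum_eq_zero
  intro l hl
  split_ifs with hc
  · have h10 : nmat b 1 0 = 0 := by simp [nmat]
    rw [h10, zero_pow (by omega)]
    ring
  · rfl

lemma Zmat_nmat_le (n : ℕ) (b : ℝ) (i j : Fin (2*n)) (h : (i:ℕ) ≤ (j:ℕ)) :
    Zmat n (nmat b) i j =
      (alphaCoef n ((i:ℕ)+1))⁻¹ * alphaCoef n ((j:ℕ)+1) *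
        (Nat.choose (j:ℕ) ((j:ℕ)-(i:ℕ)) : ℝ) * b ^ ((j:ℕ)-(i:ℕ)) := by
  have hj : (j:ℕ) < 2*n := j.isLt
  unfold Zmat
  rw [Finset.sum_eq_single ((j:ℕ) - (i:ℕ))]
  · rw [if_pos (by omega)]
    have h10 : nmat b 1 0 = 0 := by simp [nmat]
    have h00 : nmat b 0 0 = 1 := by simp [nmat]
    have h01 : nmat b 0 1 = b := by simp [nmat]
    have h11 : nmat b 1 1 = 1 := by simp [nmat]
    rw [h10, h00, h01, h11]
    have e1 : (i:ℕ) + 1 + ((j:ℕ) - (i:ℕ)) - ((j:ℕ)+1) = 0 := by omega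
    have e2 : 2*n - ((i:ℕ)+1) - ((j:ℕ)-(i:ℕ)) = 2*n - ((j:ℕ)+1) := by omega
    have e3 : (j:ℕ) + 1 - 1 = (j:ℕ) := by omega
    rw [e1, e2, e3, Nat.choose_self, pow_zero, one_pow, one_pow]
    ring
  · intro l hl hne
    split_ifs with hc
    · have h10 : nmat b 1 0 = 0 := by simp [nmat]
      rw [h10, zero_pow (by omega)]
      ring
    · rfl
  · intro hmem
    exact absurd (Finset.mem_range.mpr (by omega)) hmem

lemma Zmat_hmat_zero (n : ℕ) (b : ℝ) (i j : Fin (2*n)) (h : (i:ℕ)+(j:ℕ)+1 ≠ 2*n) :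
    Zmat n (hmat b) i j = 0 := by
  unfold Zmat
  apply Finset.sum_eq_zero
  intro l hl
  split_ifs with hc
  · by_cases hl2 : l = 2*n - 1 - (i:ℕ)
    · have h11 : hmat b 1 1 = 0 := by simp [hmat]
      rw [h11, zero_pow (by omega)]
      ring
    · have h00 : hmat b 0 0 = 0 := by simp [hmat]
      rw [h00, zero_pow (by omega)]
      ring
  · rfl

lemma Zmat_hmat_entry (n : ℕ) (b : ℝ) (i j : Fin (2*n)) (h : (i:ℕ)+(j:ℕ)+1 = 2*n) :
    Zmat n (hmat b) i j =
      (alphaCoef n ((i:ℕ)+1))⁻¹ * alphaCoef n ((j:ℕ)+1) *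
        (bet b) ^ (j:ℕ) * (-(bet b)⁻¹) ^ (i:ℕ) := by
  unfold Zmat
  rw [Finset.sum_eq_single ((j:ℕ))]
  · rw [if_pos (by omega)]
    have h00 : hmat b 0 0 = 0 := by simp [hmat]
    have h01 : hmat b 0 1 = bet b := by simp [hmat]
    have h10 : hmat b 1 0 = -(bet b)⁻¹ := by simp [hmat]
    have h11 : hmat b 1 1 = 0 := by simp [hmat]
    rw [h00, h01, h10, h11]
    have e1 : 2*n - ((i:ℕ)+1) - (j:ℕ) = 0 := by omega
    have e2 : (i:ℕ) + 1 + (j:ℕ) - ((j:ℕ)+1) = (i:ℕ) := by omega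
    have e3 : (j:ℕ) + 1 - (j:ℕ) - 1 = 0 := by omega
    have e4 : (j:ℕ) + 1 - 1 = (j:ℕ) := by omega
    rw [e1, e2, e3, e4, Nat.choose_self, Nat.choose_zero_right]
    norm_num
  · intro l hl hne
    split_ifs with hc
    · by_cases hl2 : l = 2*n - 1 - (i:ℕ)
      · have h11 : hmat b 1 1 = 0 := by simp [hmat]
        rw [h11, zero_pow (by omega)]
        ring
      · have h00 : hmat b 0 0 = 0 := by simp [hmat]
        rw [h00, zero_pow (by omega)]
        ring
    · rfl
  · intro hmem
    exact absurd (Finset.mem_range.mpr (by omega)) hmem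

lemma alpha_symm (n i j : ℕ) (h : i + j + 1 = 2*n) :
    alphaCoef n (i+1) = alphaCoef n (j+1) := by
  unfold alphaCoef
  have e : i + 1 - 1 = i := by omega
  have e' : j + 1 - 1 = j := by omega
  rw [e, e']
  have hj : j = 2*n - 1 - i := by omega
  rw [hj, Nat.choose_symm (by omega)]

theorem stmt1 (n : ℕ) (hn : 0 < n) (b : ℝ) :
    -- (a)
    (kplus b * nmat b * kminus b = nmat (-b) ∧
      nmat (b / 2) * kplus b * nmat (b / 2) = hmat b) ∧
    -- (b) `Z(h_b)(u_n e_n + u_{n+1} e_{n+1}) = (−1)^n (β(b)⁻¹ u_n e_{n+1} − β(b) u_{n+1} e_n)`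
    (∀ un un1 : ℝ,
      (Zmat n (hmat b)).mulVec
          (fun i : Fin (2 * n) => if (i : ℕ) + 1 = n then un else if (i : ℕ) + 1 = n + 1 then un1 else 0) =
        (fun i : Fin (2 * n) => if (i : ℕ) + 1 = n then (-1 : ℝ) ^ n * (-(bet b) * un1)
          else if (i : ℕ) + 1 = n + 1 then (-1 : ℝ) ^ n * ((bet b)⁻¹ * un) else 0)) ∧
    -- (c) `Z(n_b)` is upper triangular with the stated entries
    (∀ i j : Fin (2 * n),
      ((i : ℕ) < (j : ℕ) →
        Zmat n (nmat b) i j =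
          (alphaCoef n ((i : ℕ) + 1))⁻¹ * alphaCoef n ((j : ℕ) + 1) *
            (Nat.choose (j : ℕ) ((j : ℕ) - (i : ℕ)) : ℝ) * b ^ ((j : ℕ) - (i : ℕ))) ∧
      (i = j → Zmat n (nmat b) i j = 1) ∧
      ((j : ℕ) < (i : ℕ) → Zmat n (nmat b) i j = 0)) ∧
    -- in particular `Z(n_b)_{n, n+1} = n b`
    Zmat n (nmat b) (⟨n - 1, by omega⟩ : Fin (2 * n)) (⟨n, by omega⟩ : Fin (2 * n)) =
      (n : ℝ) * b := by
  obtain ⟨m, rfl⟩ : ∃ m, n = m + 1 := ⟨n - 1, by omega⟩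
  have hb := bet_sq b
  have hb0 := (bet_pos b).ne'
  refine ⟨⟨?_, ?_⟩, ?_, ?_, ?_⟩
  · ext i j
    fin_cases i <;> fin_cases j
    · simp [kplus, kminus, nmat, Matrix.mul_apply, Fin.sum_univ_two]
      field_simp
      linear_combination (-4) * hb
    · simp [kplus, kminus, nmat, Matrix.mul_apply, Fin.sum_univ_two]
      field_simp
      linear_combination (4*b) * hb
    · simp [kplus, kminus, nmat, Matrix.mul_apply, Fin.sum_univ_two]
      ring
    · simp [kplus, kminus, nmat, Matrix.mul_apply, Fin.sum_univ_two]
      field_simp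
      linear_combination (-4) * hb
  · ext i j
    fin_cases i <;> fin_cases j
    · simp [kplus, hmat, nmat, Matrix.mul_apply, Fin.sum_univ_two]
      ring
    · simp [kplus, hmat, nmat, Matrix.mul_apply, Fin.sum_univ_two]
      field_simp
      linear_combination (-4) * hb
    · simp [kplus, hmat, nmat, Matrix.mul_apply, Fin.sum_univ_two]
    · simp [kplus, hmat, nmat, Matrix.mul_apply, Fin.sum_univ_two]
  · -- part (b)
    intro un un1
    funext i
    simp only [Matrix.mulVec, dotProduct]
    have hne : (⟨m, by omega⟩ : Fin (2*(m+1))) ≠ ⟨m+1, by omega⟩ := by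
      simp [Fin.ext_iff]
    rw [Fintype.sum_eq_add (⟨m, by omega⟩ : Fin (2*(m+1))) (⟨m+1, by omega⟩ : Fin (2*(m+1))) hne]
    · simp only []
      have c1 : ((⟨m, by omega⟩ : Fin (2*(m+1))) : ℕ) = m := rfl
      have c2 : ((⟨m+1, by omega⟩ : Fin (2*(m+1))) : ℕ) = m+1 := rfl
      norm_num [c1, c2]
      have hα : alphaCoef (m+1) (m+1+1) ≠ 0 :=
        (alphaCoef_pos (m+1) (m+1+1) (by omega)).ne'
      by_cases hi1 : (i:ℕ) = m
      · rw [Zmat_hmat_zero _ _ _ _ (by rw [c1]; omega),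
          Zmat_hmat_entry _ _ _ _ (by rw [c2]; omega)]
        rw [if_pos (by omega), c2, hi1,
          alpha_symm (m+1) m (m+1) (by omega), inv_mul_cancel₀ hα]
        rw [neg_pow, inv_pow]
        field_simp
        ring
      · by_cases hi2 : (i:ℕ) = m+1
        · rw [Zmat_hmat_entry _ _ _ _ (by rw [c1]; omega),
            Zmat_hmat_zero _ _ _ _ (by rw [c2]; omega)]
          rw [if_neg (by omega), if_pos (by omega), c1, hi2,
            alpha_symm (m+1) (m+1) m (by omega)]
          have hα' : alphaCoef (m+1) (m+1) ≠ 0 :=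
            (alphaCoef_pos (m+1) (m+1) (by omega)).ne'
          rw [inv_mul_cancel₀ hα']
          rw [neg_pow, inv_pow]
          field_simp
          ring
        · rw [Zmat_hmat_zero _ _ _ _ (by rw [c1]; omega),
            Zmat_hmat_zero _ _ _ _ (by rw [c2]; omega),
            if_neg (by omega), if_neg (by omega)]
          ring
    · rintro x ⟨hx1, hx2⟩
      have hv1 : (x:ℕ) + 1 ≠ m + 1 := by
        intro hcon
        exact hx1 (Fin.ext (show (x:ℕ) = m by omega))
      have hv2 : (x:ℕ) + 1 ≠ m + 1 + 1 := by
        intro hcon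
        exact hx2 (Fin.ext (show (x:ℕ) = m + 1 by omega))
      rw [if_neg hv1, if_neg hv2, mul_zero]
  · -- part (c)
    intro i j
    refine ⟨?_, ?_, ?_⟩
    · intro hij
      exact Zmat_nmat_le (m+1) b i j (le_of_lt hij)
    · rintro rfl
      rw [Zmat_nmat_le (m+1) b i i le_rfl]
      have hα : alphaCoef (m+1) ((i:ℕ)+1) ≠ 0 :=
        (alphaCoef_pos (m+1) ((i:ℕ)+1) (by have := i.isLt; omega)).ne'
      rw [Nat.sub_self, Nat.choose_zero_right, pow_zero, inv_mul_cancel₀ hα]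
      norm_num
    · intro hij
      exact Zmat_nmat_lt (m+1) b i j hij
  · -- particular entry
    have ci : ((⟨m+1-1, by omega⟩ : Fin (2*(m+1))) : ℕ) = m := rfl
    have cj : ((⟨m+1, by omega⟩ : Fin (2*(m+1))) : ℕ) = m+1 := rfl
    rw [Zmat_nmat_le (m+1) b _ _ (by rw [ci, cj]; omega), ci, cj,
      alpha_symm (m+1) m (m+1) (by omega), inv_mul_cancel₀
        ((alphaCoef_pos (m+1) (m+1+1) (by omega)).ne')]
    have e : m + 1 - m = 1 := by omega
    rw [e, Nat.choose_one_right, pow_one]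
    push_cast
    ring


end
end

section
/- Suppose σ ∈ ℝ satisfies |P^{(ν)}(σ)| ≤ 2^{−m−10} · |P^{(ν−1)}(σ)| for every ν = ℓ, ℓ+1, …, d. Then for every τ ∈ ℝ with |σ − τ| ≤ 2^{m+7}: (a) |P^{(ν)}(τ) − P^{(ν)}(σ)| ≤ (1/5) · |P^{(ν)}(σ)| for every ν = ℓ, …, d; (b) |P^{(ν)}(τ)| ≤ 2^{1−(m+4)k} · |P^{(ν−k)}(σ)| whenever ℓ ≤ ν ≤ d and k ≥ 0 is an integer with ν − k ≥ ℓ. -/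
/- STATEMENT 10: Taylor-expansion estimates for the derivatives of a polynomial
(Lemma 6.2 (i)). -/

open Polynomial

theorem stmt10 (P : Polynomial ℝ) (d : ℕ) (hd : d = P.natDegree) (hd1 : 1 ≤ d)
    (ℓ : ℕ) (hℓ : 1 ≤ ℓ) (hℓd : ℓ ≤ d) (m : ℤ) (σ : ℝ)
    (hσ : ∀ ν : ℕ, ℓ ≤ ν → ν ≤ d →
      |(Polynomial.derivative^[ν] P).eval σ| ≤
        (2 : ℝ) ^ (-m - 10) * |(Polynomial.derivative^[ν - 1] P).eval σ|)
    (τ : ℝ) (hτ : |σ - τ| ≤ (2 : ℝ) ^ (m + 7)) :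
    -- (a)
    (∀ ν : ℕ, ℓ ≤ ν → ν ≤ d →
      |(Polynomial.derivative^[ν] P).eval τ - (Polynomial.derivative^[ν] P).eval σ| ≤
        (1 / 5) * |(Polynomial.derivative^[ν] P).eval σ|) ∧
    -- (b)
    (∀ ν k : ℕ, ℓ ≤ ν → ν ≤ d → ℓ ≤ ν - k →
      |(Polynomial.derivative^[ν] P).eval τ| ≤
        (2 : ℝ) ^ (1 - (m + 4) * (k : ℤ)) * |(Polynomial.derivative^[ν - k] P).eval σ|) := by
  have hτσ : |τ - σ| ≤ (2 : ℝ) ^ (m + 7) := by rwa [abs_sub_comm] at hτ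
  have hzero : ∀ n : ℕ, d < n → (Polynomial.derivative^[n] P) = 0 := by
    intro n hn
    exact Polynomial.iterate_derivative_eq_zero (by omega)
  -- chaining the hypothesis
  have chain : ∀ a j : ℕ, ℓ ≤ a → a ≤ d →
      |(Polynomial.derivative^[a + j] P).eval σ| ≤
        ((2 : ℝ) ^ (-m - 10)) ^ j * |(Polynomial.derivative^[a] P).eval σ| := by
    intro a j ha had
    induction j with
    | zero => simp
    | succ j ih =>
      by_cases h : a + (j + 1) ≤ d
      · have h1 := hσ (a + (j + 1)) (by omega) h
        have he : a + (j + 1) - 1 = a + j := by omega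
        rw [he] at h1
        have hp : (0 : ℝ) ≤ (2 : ℝ) ^ (-m - 10) := by positivity
        calc |(Polynomial.derivative^[a + (j + 1)] P).eval σ|
            ≤ (2 : ℝ) ^ (-m - 10) * |(Polynomial.derivative^[a + j] P).eval σ| := h1
          _ ≤ (2 : ℝ) ^ (-m - 10) *
              (((2 : ℝ) ^ (-m - 10)) ^ j * |(Polynomial.derivative^[a] P).eval σ|) := by
              exact mul_le_mul_of_nonneg_left ih hp
          _ = ((2 : ℝ) ^ (-m - 10)) ^ (j + 1) * |(Polynomial.derivative^[a] P).eval σ| := by ring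
      · rw [hzero _ (by omega)]
        simp only [Polynomial.eval_zero, abs_zero]
        positivity
  -- hasseDeriv eval formula
  have hhd : ∀ (j : ℕ) (f : ℝ[X]),
      (Polynomial.hasseDeriv j f).eval σ = ((Polynomial.derivative^[j] f).eval σ) / (j.factorial) := by
    intro j f
    have h2 : (j.factorial • Polynomial.hasseDeriv (R := ℝ) j) f = Polynomial.derivative^[j] f :=
      congrFun (Polynomial.factorial_smul_hasseDeriv (R := ℝ) j) f
    rw [LinearMap.smul_apply] at h2
    rw [← h2]
    simp [nsmul_eq_mul]
    rw [eq_div_iff (by positivity)]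
    ring
  -- geometric sum bound
  have hsum_eq : ∀ N : ℕ, ∑ i ∈ Finset.range N, ((1 : ℝ) / 8) ^ (i + 1) =
      (1 - (1 / 8 : ℝ) ^ N) / 7 := by
    intro N
    induction N with
    | zero => simp
    | succ N ih => rw [Finset.sum_range_succ, ih, pow_succ]; ring
  -- key Taylor estimate, with constant 1/7
  have key : ∀ ν : ℕ, ℓ ≤ ν → ν ≤ d →
      |(Polynomial.derivative^[ν] P).eval τ - (Polynomial.derivative^[ν] P).eval σ| ≤
        (1 / 7) * |(Polynomial.derivative^[ν] P).eval σ| := by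
    intro ν hℓν hνd
    set f : ℝ[X] := Polynomial.derivative^[ν] P with hf
    set N : ℕ := f.natDegree with hN
    have hexp : f.eval τ = ∑ i ∈ Finset.range (N + 1),
        (Polynomial.hasseDeriv i f).eval σ * (τ - σ) ^ i := by
      conv_lhs => rw [← Polynomial.taylor_eval_sub σ f τ]
      rw [Polynomial.eval_eq_sum_range, Polynomial.natDegree_taylor]
      exact Finset.sum_congr rfl fun i _ => by rw [Polynomial.taylor_coeff]
    have hdiff : f.eval τ - f.eval σ = ∑ i ∈ Finset.range N,
        (Polynomial.hasseDeriv (i + 1) f).eval σ * (τ - σ) ^ (i + 1) := by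
      rw [hexp, Finset.sum_range_succ']
      simp [Polynomial.hasseDeriv_zero]
    rw [hdiff]
    -- bound each term
    have hterm : ∀ i ∈ Finset.range N,
        |(Polynomial.hasseDeriv (i + 1) f).eval σ * (τ - σ) ^ (i + 1)| ≤
          ((1 : ℝ) / 8) ^ (i + 1) * |f.eval σ| := by
      intro i _
      set j : ℕ := i + 1
      rw [abs_mul, abs_pow]
      have h1 : |(Polynomial.hasseDeriv j f).eval σ| ≤ |(Polynomial.derivative^[ν + j] P).eval σ| := by
        rw [hhd]
        have hiter : Polynomial.derivative^[j] f = Polynomial.derivative^[ν + j] P := by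
          rw [hf, ← Function.iterate_add_apply, Nat.add_comm j ν]
        rw [hiter, abs_div, Nat.abs_cast]
        have hfac : (1 : ℝ) ≤ (j.factorial : ℝ) := by
          exact_mod_cast Nat.one_le_iff_ne_zero.mpr (Nat.factorial_ne_zero j)
        exact div_le_self (abs_nonneg _) hfac
      have h2 := chain ν j hℓν hνd
      have h3 : |τ - σ| ^ j ≤ ((2 : ℝ) ^ (m + 7)) ^ j :=
        pow_le_pow_left₀ (abs_nonneg _) hτσ j
      calc |(Polynomial.hasseDeriv j f).eval σ| * |τ - σ| ^ j
          ≤ (((2 : ℝ) ^ (-m - 10)) ^ j * |f.eval σ|) * ((2 : ℝ) ^ (m + 7)) ^ j := by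
            apply mul_le_mul (h1.trans h2) h3 (by positivity) (by positivity)
        _ = ((2 : ℝ) ^ (-m - 10) * (2 : ℝ) ^ (m + 7)) ^ j * |f.eval σ| := by
            rw [mul_pow]; ring
        _ = ((1 : ℝ) / 8) ^ j * |f.eval σ| := by
            rw [← zpow_add₀ (two_ne_zero)]
            have he : -m - 10 + (m + 7) = -3 := by ring
            rw [he]
            norm_num
        _ = _ := rfl
    calc |∑ i ∈ Finset.range N, (Polynomial.hasseDeriv (i + 1) f).eval σ * (τ - σ) ^ (i + 1)|
        ≤ ∑ i ∈ Finset.range N,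
            |(Polynomial.hasseDeriv (i + 1) f).eval σ * (τ - σ) ^ (i + 1)| :=
          Finset.abs_sum_le_sum_abs _ _
      _ ≤ ∑ i ∈ Finset.range N, ((1 : ℝ) / 8) ^ (i + 1) * |f.eval σ| :=
          Finset.sum_le_sum hterm
      _ = (∑ i ∈ Finset.range N, ((1 : ℝ) / 8) ^ (i + 1)) * |f.eval σ| := by
          rw [Finset.sum_mul]
      _ ≤ (1 / 7) * |f.eval σ| := by
          apply mul_le_mul_of_nonneg_right _ (abs_nonneg _)
          rw [hsum_eq]
          have : (0 : ℝ) ≤ (1 / 8 : ℝ) ^ N := by positivity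
          linarith
  constructor
  · intro ν hℓν hνd
    calc |(Polynomial.derivative^[ν] P).eval τ - (Polynomial.derivative^[ν] P).eval σ|
        ≤ (1 / 7) * |(Polynomial.derivative^[ν] P).eval σ| := key ν hℓν hνd
      _ ≤ (1 / 5) * |(Polynomial.derivative^[ν] P).eval σ| := by
          apply mul_le_mul_of_nonneg_right (by norm_num) (abs_nonneg _)
  · intro ν k hℓν hνd hℓνk
    have hkν : k ≤ ν := by omega
    have h1 : |(Polynomial.derivative^[ν] P).eval τ| ≤
        (8 / 7) * |(Polynomial.derivative^[ν] P).eval σ| := by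
      have := key ν hℓν hνd
      have habs := abs_sub_abs_le_abs_sub ((Polynomial.derivative^[ν] P).eval τ)
        ((Polynomial.derivative^[ν] P).eval σ)
      linarith
    have h2 := chain (ν - k) k hℓνk (by omega)
    rw [Nat.sub_add_cancel hkν] at h2
    have hA : ((2 : ℝ) ^ (-m - 10)) ^ k = (2 : ℝ) ^ ((-m - 10) * (k : ℤ)) := by
      rw [zpow_mul, zpow_natCast]
    have h2k : (2 : ℝ) ≤ (2 : ℝ) ^ (1 + 6 * (k : ℤ)) := by
      calc (2 : ℝ) = (2 : ℝ) ^ (1 : ℤ) := (zpow_one 2).symm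
        _ ≤ _ := by
            apply zpow_le_zpow_right₀ one_le_two
            omega
    have hexp2 : (2 : ℝ) ^ (1 - (m + 4) * (k : ℤ)) =
        (2 : ℝ) ^ (1 + 6 * (k : ℤ)) * (2 : ℝ) ^ ((-m - 10) * (k : ℤ)) := by
      rw [← zpow_add₀ (two_ne_zero)]
      ring_nf
    calc |(Polynomial.derivative^[ν] P).eval τ|
        ≤ (8 / 7) * |(Polynomial.derivative^[ν] P).eval σ| := h1
      _ ≤ (8 / 7) * ((2 : ℝ) ^ ((-m - 10) * (k : ℤ)) * |(Polynomial.derivative^[ν - k] P).eval σ|) := by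
          apply mul_le_mul_of_nonneg_left _ (by norm_num)
          rw [← hA]; exact h2
      _ ≤ (2 : ℝ) ^ (1 + 6 * (k : ℤ)) *
            ((2 : ℝ) ^ ((-m - 10) * (k : ℤ)) * |(Polynomial.derivative^[ν - k] P).eval σ|) := by
          apply mul_le_mul_of_nonneg_right _ (by positivity)
          linarith
      _ = (2 : ℝ) ^ (1 - (m + 4) * (k : ℤ)) * |(Polynomial.derivative^[ν - k] P).eval σ| := by
          rw [hexp2]; ring
end

section
/- There is an absolute constant C such that for every integer m ≥ 1, every nonzero real polynomial P of degree at most m, every ρ > 0, every A > 0, and all c₁, c₂ ∈ ℝ with c₁ + c₂ ≠ 0, one has ∬_{{(s,t) ∈ ℝ² : |s−t| ≤ ρ}} |1 − η₀( A · ρ · P′(c₁s+c₂t) / P(c₁s+c₂t) )| ds dt ≤ C · A · m² · ρ² / |c₁+c₂|, where the integrand is taken to equal 1 on the (measure-zero) set where P(c₁s+c₂t) = 0. -/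
/- STATEMENT 11: the measure estimate of Lemma 6.4. -/

open MeasureTheory Polynomial
open scoped ENNReal

/-- Logarithmic derivative of a complex polynomial at a non-root. -/
lemma stmt11_logderiv (Q : Polynomial ℂ) (x : ℂ) (hx : Q.eval x ≠ 0) :
    Q.derivative.eval x = Q.eval x * (Q.roots.map fun a => (x - a)⁻¹).sum := by
  classical
  have hQ0 : Q ≠ 0 := fun h => hx (by simp [h])
  have hsplit : Q.Splits := IsAlgClosed.splits Q
  have hprod := hsplit.eq_prod_roots
  set R := Q.roots with hRdef
  have hxroot : ∀ a ∈ R, x - a ≠ 0 := by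
    intro a ha h
    exact hx (by rw [sub_eq_zero.mp h]; exact (Polynomial.mem_roots'.mp ha).2)
  have hder : Q.derivative = C Q.leadingCoeff *
      (R.map fun a => ((R.erase a).map fun b => X - C b).prod).sum := by
    conv_lhs => rw [hprod]
    rw [derivative_C_mul, derivative_prod]
    congr 2
    apply Multiset.map_congr rfl
    intro a _
    rw [derivative_X_sub_C, mul_one]
  have hPi : Q.eval x = Q.leadingCoeff * (R.map fun b => x - b).prod := by
    conv_lhs => rw [hprod]
    simp [eval_multiset_prod, Multiset.map_map, Function.comp]
  have hterm : ∀ a ∈ R, Polynomial.eval x ((R.erase a).map fun b => X - C b).prod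
      = (x - a)⁻¹ * (R.map fun b => x - b).prod := by
    intro a ha
    have h1 : (x - a) * ((R.erase a).map fun b => x - b).prod
        = (R.map fun b => x - b).prod := Multiset.prod_map_erase (f := fun b => x - b) ha
    rw [eval_multiset_prod, Multiset.map_map]
    have h2 : (Multiset.map (eval x ∘ fun b => X - C b) (R.erase a))
        = (R.erase a).map fun b => x - b := by
      apply Multiset.map_congr rfl
      intro b _
      simp
    rw [h2, ← h1, ← mul_assoc, inv_mul_cancel₀ (hxroot a ha), one_mul]
  calc Q.derivative.eval x
      = Q.leadingCoeff * (R.map fun a =>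
          Polynomial.eval x ((R.erase a).map fun b => X - C b).prod).sum := by
        rw [hder, eval_mul, eval_C]
        congr 1
        have hms := map_multiset_sum (Polynomial.evalRingHom x)
          (Multiset.map (fun a => ((R.erase a).map fun b => X - C b).prod) R)
        simp only [Polynomial.coe_evalRingHom] at hms
        rw [hms, Multiset.map_map]
        rfl
    _ = Q.leadingCoeff * (R.map fun a => (x - a)⁻¹ * (R.map fun b => x - b).prod).sum := by
        congr 2
        exact Multiset.map_congr rfl hterm
    _ = Q.leadingCoeff * ((R.map fun a => (x - a)⁻¹).sum * (R.map fun b => x - b).prod) := by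
        rw [Multiset.sum_map_mul_right]
    _ = Q.eval x * (R.map fun a => (x - a)⁻¹).sum := by rw [hPi]; ring

/-- The shear map used to compute the measure. -/
def stmt11M (c₁ c₂ : ℝ) : (ℝ × ℝ) →ₗ[ℝ] (ℝ × ℝ) where
  toFun z := (c₁ * z.1 + c₂ * z.2, z.1 - z.2)
  map_add' z w := by ext <;> dsimp <;> ring
  map_smul' r z := by ext <;> dsimp <;> ring

lemma stmt11M_apply (c₁ c₂ : ℝ) (z : ℝ × ℝ) :
    stmt11M c₁ c₂ z = (c₁ * z.1 + c₂ * z.2, z.1 - z.2) := rfl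

lemma stmt11M_det (c₁ c₂ : ℝ) : LinearMap.det (stmt11M c₁ c₂) = -(c₁ + c₂) := by
  rw [← LinearMap.det_toMatrix (Module.Basis.finTwoProd ℝ), Matrix.det_fin_two]
  simp only [LinearMap.toMatrix_apply, Module.Basis.finTwoProd_zero, Module.Basis.finTwoProd_one,
    Module.Basis.coe_finTwoProd_repr, stmt11M_apply]
  norm_num
  ring

theorem stmt11 (η₀ : ℝ → ℝ) (hsm : ContDiff ℝ (⊤ : ℕ∞) η₀) (hev : ∀ s, η₀ (-s) = η₀ s)
    (h01 : ∀ s, η₀ s ∈ Set.Icc (0 : ℝ) 1)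
    (hone : ∀ s, |s| ≤ 1 / 2 → η₀ s = 1) (hzero : ∀ s, 3 / 4 ≤ |s| → η₀ s = 0) :
    ∃ C > 0,
      ∀ m : ℕ, 1 ≤ m →
      ∀ P : Polynomial ℝ, P ≠ 0 → P.natDegree ≤ m →
      ∀ ρ : ℝ, 0 < ρ →
      ∀ A : ℝ, 0 < A →
      ∀ c₁ c₂ : ℝ, c₁ + c₂ ≠ 0 →
        (∫⁻ z in {z : ℝ × ℝ | |z.1 - z.2| ≤ ρ},
            ENNReal.ofReal
              (if P.eval (c₁ * z.1 + c₂ * z.2) = 0 then 1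
               else |1 - η₀ (A * ρ * P.derivative.eval (c₁ * z.1 + c₂ * z.2) /
                  P.eval (c₁ * z.1 + c₂ * z.2))|)) ≤
          ENNReal.ofReal (C * A * (m : ℝ) ^ 2 * ρ ^ 2 / |c₁ + c₂|) := by
  classical
  refine ⟨8, by norm_num, ?_⟩
  intro m hm P hP hdeg ρ hρ A hA c₁ c₂ hc
  set Q := P.map (algebraMap ℝ ℂ) with hQdef
  have hQ0 : Q ≠ 0 := (Polynomial.map_ne_zero_iff (algebraMap ℝ ℂ).injective).mpr hP
  set R := Q.roots with hRdef
  have hm1 : (1 : ℝ) ≤ (m : ℝ) := by exact_mod_cast hm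
  have hdegQ : Q.natDegree ≤ m := by
    rw [hQdef, Polynomial.natDegree_map_eq_of_injective (algebraMap ℝ ℂ).injective]
    exact hdeg
  have hcardN : Multiset.card R ≤ m := le_trans (Polynomial.card_roots' Q) hdegQ
  have hcard : (Multiset.card R : ℝ) ≤ (m : ℝ) := by exact_mod_cast hcardN
  set δ : ℝ := 2 * A * ρ * m with hδdef
  have hδpos : 0 < δ := by positivity
  set Bad : Set ℝ := ⋃ a ∈ R.toFinset, Metric.closedBall a.re δ with hBaddef
  have hBadMeas : MeasurableSet Bad :=
    R.toFinset.measurableSet_biUnion fun a _ => measurableSet_closedBall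
  -- key pointwise estimate
  have key : ∀ x : ℝ, x ∉ Bad →
      P.eval x ≠ 0 ∧ |A * ρ * P.derivative.eval x / P.eval x| ≤ 1 / 2 := by
    intro x hx
    have hfar : ∀ a ∈ R, δ < ‖(x : ℂ) - a‖ := by
      intro a ha
      have hx' : x ∉ Metric.closedBall a.re δ := fun h =>
        hx (Set.mem_biUnion (Multiset.mem_toFinset.mpr ha) h)
      have h1 : δ < |x - a.re| := by
        simpa [Metric.mem_closedBall, Real.dist_eq, not_le] using hx'
      calc δ < |x - a.re| := h1
        _ = |((x : ℂ) - a).re| := by simp [Complex.sub_re]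
        _ ≤ ‖(x : ℂ) - a‖ := Complex.abs_re_le_norm _
    have hPx : P.eval x ≠ 0 := by
      intro h
      have hmem : (x : ℂ) ∈ R := by
        rw [hRdef, Polynomial.mem_roots hQ0]
        show Q.eval (x : ℂ) = 0
        rw [hQdef, Polynomial.eval_map, ← Complex.coe_algebraMap, Polynomial.eval₂_at_apply]
        simp [h]
      have := hfar _ hmem
      simp at this
      linarith
    refine ⟨hPx, ?_⟩
    have hQx : Q.eval (x : ℂ) ≠ 0 := by
      rw [hQdef, Polynomial.eval_map, ← Complex.coe_algebraMap, Polynomial.eval₂_at_apply]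
      simpa using hPx
    have hld := stmt11_logderiv Q x hQx
    have hQevals : ‖Q.eval (x : ℂ)‖ = |P.eval x| := by
      rw [hQdef, Polynomial.eval_map, ← Complex.coe_algebraMap, Polynomial.eval₂_at_apply]
      simp [Complex.norm_real]
    have hQderevals : ‖Q.derivative.eval (x : ℂ)‖ = |P.derivative.eval x| := by
      rw [hQdef, Polynomial.derivative_map, Polynomial.eval_map, ← Complex.coe_algebraMap,
        Polynomial.eval₂_at_apply]
      simp [Complex.norm_real]
    have hsum : (R.map fun a => ‖(x : ℂ) - a‖⁻¹).sum ≤ (m : ℝ) * δ⁻¹ := by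
      have h1 : (R.map fun a => ‖(x : ℂ) - a‖⁻¹).sum
          ≤ Multiset.card (R.map fun a => ‖(x : ℂ) - a‖⁻¹) • δ⁻¹ := by
        apply Multiset.sum_le_card_nsmul
        intro y hy
        obtain ⟨a, ha, rfl⟩ := Multiset.mem_map.mp hy
        exact inv_anti₀ hδpos (le_of_lt (hfar a ha))
      rw [Multiset.card_map, nsmul_eq_mul] at h1
      refine h1.trans (mul_le_mul_of_nonneg_right hcard (by positivity))
    have hnormsum : ‖(R.map fun a => ((x : ℂ) - a)⁻¹).sum‖ ≤ (m : ℝ) * δ⁻¹ := by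
      refine (norm_multiset_sum_le _).trans ?_
      rw [Multiset.map_map]
      have h2 : (R.map (norm ∘ fun a => ((x : ℂ) - a)⁻¹))
          = R.map fun a => ‖(x : ℂ) - a‖⁻¹ := by
        apply Multiset.map_congr rfl
        intro a _
        simp
      rw [h2]
      exact hsum
    have hnorm : |P.derivative.eval x| ≤ |P.eval x| * ((m : ℝ) * δ⁻¹) := by
      rw [← hQevals, ← hQderevals, hld, norm_mul]
      exact mul_le_mul_of_nonneg_left hnormsum (norm_nonneg _)
    have hPxpos : 0 < |P.eval x| := abs_pos.mpr hPx
    have hhalf : A * ρ * ((m : ℝ) * δ⁻¹) = 1 / 2 := by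
      rw [hδdef]
      field_simp
    rw [abs_div, div_le_iff₀ hPxpos, abs_mul, abs_mul, abs_of_pos hA, abs_of_pos hρ]
    calc A * ρ * |P.derivative.eval x| ≤ A * ρ * (|P.eval x| * ((m : ℝ) * δ⁻¹)) := by
          exact mul_le_mul_of_nonneg_left hnorm (by positivity)
      _ = |P.eval x| * (A * ρ * ((m : ℝ) * δ⁻¹)) := by ring
      _ = 1 / 2 * |P.eval x| := by rw [hhalf]; ring
  -- pass to an indicator function
  set T : Set (ℝ × ℝ) := {z : ℝ × ℝ | c₁ * z.1 + c₂ * z.2 ∈ Bad} with hTdef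
  have hTmeas : MeasurableSet T := by
    have hmeas : Measurable fun z : ℝ × ℝ => c₁ * z.1 + c₂ * z.2 := by fun_prop
    exact hmeas hBadMeas
  have hbound : ∀ z : ℝ × ℝ,
      ENNReal.ofReal (if P.eval (c₁ * z.1 + c₂ * z.2) = 0 then 1
        else |1 - η₀ (A * ρ * P.derivative.eval (c₁ * z.1 + c₂ * z.2) /
          P.eval (c₁ * z.1 + c₂ * z.2))|) ≤ T.indicator 1 z := by
    intro z
    by_cases hz : z ∈ T
    · rw [Set.indicator_of_mem hz, Pi.one_apply]
      split
      · simp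
      · apply ENNReal.ofReal_le_one.mpr
        obtain ⟨h0', h1'⟩ := h01 (A * ρ * P.derivative.eval (c₁ * z.1 + c₂ * z.2) /
          P.eval (c₁ * z.1 + c₂ * z.2))
        rw [abs_le]
        constructor <;> linarith
    · rw [Set.indicator_of_notMem hz]
      obtain ⟨h0, hhalf⟩ := key _ hz
      rw [if_neg h0, hone _ hhalf]
      simp
  have hdet : LinearMap.det (stmt11M c₁ c₂) ≠ 0 := by
    rw [stmt11M_det]
    intro h
    exact hc (by linarith)
  calc (∫⁻ z in {z : ℝ × ℝ | |z.1 - z.2| ≤ ρ},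
        ENNReal.ofReal
          (if P.eval (c₁ * z.1 + c₂ * z.2) = 0 then 1
           else |1 - η₀ (A * ρ * P.derivative.eval (c₁ * z.1 + c₂ * z.2) /
              P.eval (c₁ * z.1 + c₂ * z.2))|))
      ≤ ∫⁻ z in {z : ℝ × ℝ | |z.1 - z.2| ≤ ρ}, T.indicator 1 z :=
        lintegral_mono hbound
    _ = volume (T ∩ {z : ℝ × ℝ | |z.1 - z.2| ≤ ρ}) := by
        rw [lintegral_indicator_one hTmeas, Measure.restrict_apply hTmeas]
    _ ≤ volume ((stmt11M c₁ c₂) ⁻¹' (Bad ×ˢ (Set.Icc (-ρ) ρ))) := by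
        apply measure_mono
        rintro z ⟨hz1, hz2⟩
        simp only [Set.mem_preimage, stmt11M_apply, Set.mem_prod, Set.mem_Icc]
        exact ⟨hz1, abs_le.mp hz2⟩
    _ = ENNReal.ofReal |(LinearMap.det (stmt11M c₁ c₂))⁻¹| * volume (Bad ×ˢ (Set.Icc (-ρ) ρ)) :=
        Measure.addHaar_preimage_linearMap volume hdet _
    _ = ENNReal.ofReal |c₁ + c₂|⁻¹ * (volume Bad * ENNReal.ofReal (2 * ρ)) := by
        rw [stmt11M_det, Measure.volume_eq_prod, Measure.prod_prod, Real.volume_Icc,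
          show ρ - -ρ = 2 * ρ by ring, abs_inv, abs_neg]
    _ ≤ ENNReal.ofReal |c₁ + c₂|⁻¹ * (((m : ℝ≥0∞) * ENNReal.ofReal (2 * δ)) *
          ENNReal.ofReal (2 * ρ)) := by
        gcongr
        calc volume Bad ≤ ∑ a ∈ R.toFinset, volume (Metric.closedBall a.re δ) :=
              measure_biUnion_finset_le _ _
          _ = R.toFinset.card • ENNReal.ofReal (2 * δ) := by
              simp [Real.volume_closedBall]
          _ ≤ (m : ℝ≥0∞) * ENNReal.ofReal (2 * δ) := by
              rw [nsmul_eq_mul]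
              gcongr
              exact_mod_cast le_trans (Multiset.toFinset_card_le R) hcardN
    _ = ENNReal.ofReal (8 * A * (m : ℝ) ^ 2 * ρ ^ 2 / |c₁ + c₂|) := by
        rw [show ((m : ℕ) : ℝ≥0∞) = ENNReal.ofReal (m : ℝ) by
          simp [ENNReal.ofReal_natCast]]
        rw [← ENNReal.ofReal_mul (by positivity), ← ENNReal.ofReal_mul (by positivity),
          ← ENNReal.ofReal_mul (by positivity)]
        congr 1
        rw [hδdef, div_eq_mul_inv]
        ring
end

section
/- Let A be an abelian group and let Z_S, Z_R and D be subgroups of A such that Z_S ∩ Z_R = {1} and D is contained in the subgroup Z_S·Z_R. If D ∩ Z_S has finite index in Z_S, then the subgroup (D ∩ Z_S)·(D ∩ Z_R) has finite index in D. -/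
/- STATEMENT 18: if D ≤ Z_S·Z_R with Z_S ∩ Z_R = {1}, and D ∩ Z_S has finite index in Z_S,
then (D ∩ Z_S)·(D ∩ Z_R) has finite index in D. -/

open scoped Pointwise

theorem stmt18 {A : Type*} [CommGroup A] (ZS ZR D : Subgroup A)
    (hdisj : ZS ⊓ ZR = ⊥)
    (hD : (D : Set A) ⊆ (ZS : Set A) * (ZR : Set A))
    (hfin : ((D ⊓ ZS).subgroupOf ZS).FiniteIndex) :
    (((D ⊓ ZS) ⊔ (D ⊓ ZR)).subgroupOf D).FiniteIndex := by
  classical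
  set H := (D ⊓ ZS).subgroupOf ZS with hH
  have hdec : ∀ d : D, ∃ s : ZS, ∃ r : ZR, (d : A) = s * r := by
    intro d
    obtain ⟨s, hs, r, hr, h⟩ := hD d.2
    exact ⟨⟨s, hs⟩, ⟨r, hr⟩, h.symm⟩
  choose σ ρ hσρ using hdec
  have huniq : ∀ (s s' : ZS) (r r' : ZR), (s : A) * r = (s' : A) * r' → s = s' := by
    intro s s' r r' h
    have hmem : (s : A) / (s' : A) ∈ ZS ⊓ ZR := by
      constructor
      · exact ZS.div_mem s.2 s'.2
      · have : (s : A) / (s' : A) = (r' : A) / (r : A) := by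
          rw [div_eq_div_iff_mul_eq_mul, h, mul_comm]
        rw [this]
        exact ZR.div_mem r'.2 r.2
    rw [hdisj] at hmem
    exact Subtype.ext (div_eq_one.mp (Subgroup.mem_bot.mp hmem))
  let f : D →* ZS ⧸ H :=
    { toFun := fun d => QuotientGroup.mk (σ d)
      map_one' := by
        have h1 : (σ 1 : A) * (ρ 1 : A) = (1 : ZS) * (1 : ZR) := by
          simpa using (hσρ 1).symm
        have := huniq (σ 1) 1 (ρ 1) 1 h1
        simp [this]
      map_mul' := by
        intro d1 d2
        have h1 : (σ (d1 * d2) : A) * (ρ (d1 * d2) : A)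
            = ((σ d1 * σ d2 : ZS) : A) * ((ρ d1 * ρ d2 : ZR) : A) := by
          push_cast
          rw [← hσρ (d1 * d2)]
          push_cast
          rw [hσρ d1, hσρ d2]
          exact mul_mul_mul_comm _ _ _ _
        have := huniq (σ (d1 * d2)) (σ d1 * σ d2) (ρ (d1 * d2)) (ρ d1 * ρ d2) h1
        simp [this] }
  haveI : Finite (ZS ⧸ H) := Subgroup.finite_quotient_of_finiteIndex
  haveI : Finite f.range := Subtype.finite
  haveI : f.ker.FiniteIndex := Subgroup.finiteIndex_ker f
  apply Subgroup.finiteIndex_of_le (H := f.ker)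
  intro d hd
  have hker : (σ d : A) ∈ D ⊓ ZS := by
    have : QuotientGroup.mk (σ d) = (1 : ZS ⧸ H) := hd
    have hmem : σ d ∈ H := (QuotientGroup.eq_one_iff _).mp this
    exact hmem
  have hρD : (ρ d : A) ∈ D := by
    have : (ρ d : A) = (σ d : A)⁻¹ * (d : A) := by
      rw [hσρ d]; group
    rw [this]
    exact mul_mem (inv_mem hker.1) d.2
  have : (d : A) ∈ (D ⊓ ZS) ⊔ (D ⊓ ZR) := by
    rw [hσρ d]
    exact Subgroup.mul_mem_sup hker ⟨hρD, (ρ d).2⟩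
  exact this
end
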